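/- Let x = (a b; c d) ∈ SL2(F). If v(d) ≤ v(b) and v(d) < v(c), then x ∈ I · (d^{-1}, 0; 0, d) · I. -/

import Mathlib

noncomputable section

/-- The 2-dimensional local field `F = 𝔽_q((t1))((t2))` (iterated Laurent series). -/
abbrev F2 (Fq : Type) [Field Fq] : Type := LaurentSeries (LaurentSeries Fq)

variable (Fq : Type) [Field Fq] [Fintype Fq]

/-- The local parameter `t1`. -/
def t1 : F2 Fq := HahnSeries.single 0 (HahnSeries.single 1 1)

/-- The local parameter `t2`. -/
def t2 : F2 Fq := HahnSeries.single 1 1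

/-- The rank-two valuation `v(x) = (v1 x, v2 x)` of a nonzero `x` (junk value at `0`):
`v2 x` is the `t2`-adic order of `x`, and `v1 x` is the `t1`-adic order of the leading
`t2`-coefficient of `x`. -/
def vv (x : F2 Fq) : ℤ × ℤ := ((x.coeff x.order).order, x.order)

/-- The lexicographic-from-the-right (non-strict) order on `ℤ²`. -/
def lexle (a b : ℤ × ℤ) : Prop := a.2 < b.2 ∨ (a.2 = b.2 ∧ a.1 ≤ b.1)

/-- The lexicographic-from-the-right strict order on `ℤ²`. -/
def lexlt (a b : ℤ × ℤ) : Prop := a.2 < b.2 ∨ (a.2 = b.2 ∧ a.1 < b.1)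

/-- `v(x) ≤ v(y)`, with the convention `v(0) = ∞`. -/
def vle (x y : F2 Fq) : Prop := x ≠ 0 ∧ (y = 0 ∨ lexle (vv Fq x) (vv Fq y))

/-- `v(x) < v(y)`, with the convention `v(0) = ∞`. -/
def vlt (x y : F2 Fq) : Prop := x ≠ 0 ∧ (y = 0 ∨ lexlt (vv Fq x) (vv Fq y))

/-- The rank-two valuation ring `O` of `F`. -/
def Oring : Set (F2 Fq) := {x | x = 0 ∨ lexle (0, 0) (vv Fq x)}

/-- `SL₂(F)` as the set of 2×2 matrices of determinant 1. -/
def SL2 : Set (Matrix (Fin 2) (Fin 2) (F2 Fq)) := {g | g.det = 1}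

/-- The (double) Iwahori subgroup `I ⊆ SL₂(O)`: entries in `O`, lower-left entry in `t1·O`. -/
def Iwahori : Set (Matrix (Fin 2) (Fin 2) (F2 Fq)) :=
  {g | g.det = 1 ∧ (∀ i j, g i j ∈ Oring Fq) ∧ ∃ y ∈ Oring Fq, g 1 0 = t1 Fq * y}

/-- The matrix `η^{(1)}_{i,j} = diag(t1^i t2^j, t1^{-i} t2^{-j})`. -/
def eta1 (i j : ℤ) : Matrix (Fin 2) (Fin 2) (F2 Fq) :=
  !![t1 Fq ^ i * t2 Fq ^ j, 0; 0, t1 Fq ^ (-i) * t2 Fq ^ (-j)]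

/-- The matrix `η^{(2)}_{i,j} = (0, t1^i t2^j; -t1^{-i} t2^{-j}, 0)`. -/
def eta2 (i j : ℤ) : Matrix (Fin 2) (Fin 2) (F2 Fq) :=
  !![0, t1 Fq ^ i * t2 Fq ^ j; -(t1 Fq ^ (-i) * t2 Fq ^ (-j)), 0]

/-- The double coset `I·η·I`. -/
def doubleCoset (η : Matrix (Fin 2) (Fin 2) (F2 Fq)) : Set (Matrix (Fin 2) (Fin 2) (F2 Fq)) :=
  {x | ∃ g ∈ Iwahori Fq, ∃ h ∈ Iwahori Fq, x = g * η * h}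

/-- The right coset `I·z`. -/
def rcoset (z : Matrix (Fin 2) (Fin 2) (F2 Fq)) : Set (Matrix (Fin 2) (Fin 2) (F2 Fq)) :=
  {x | ∃ g ∈ Iwahori Fq, x = g * z}

set_option linter.unusedSectionVars false

instance : IsCancelAdd (F2 Fq) := AddCancelMonoid.toIsCancelAdd _

lemma t1_ne : t1 Fq ≠ 0 := by
  simp [t1, HahnSeries.single_ne_zero, HahnSeries.single_eq_zero_iff]

lemma vv_t1 : vv Fq (t1 Fq) = (1, 0) := by
  have h1 : (HahnSeries.single (1:ℤ) (1:Fq)) ≠ 0 := by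
    simp [HahnSeries.single_eq_zero_iff]
  simp [vv, t1, HahnSeries.order_single h1, HahnSeries.order_single,
    HahnSeries.coeff_single_same]

lemma vv_one : vv Fq 1 = (0, 0) := by
  simp [vv, HahnSeries.order_one]

lemma vv_mul (x y : F2 Fq) (hx : x ≠ 0) (hy : y ≠ 0) :
    vv Fq (x * y) = ((vv Fq x).1 + (vv Fq y).1, (vv Fq x).2 + (vv Fq y).2) := by
  have ho : (x * y).order = x.order + y.order := HahnSeries.order_mul hx hy
  have hc : (x * y).coeff ((x * y).order) = x.coeff x.order * y.coeff y.order := by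
    rw [ho, HahnSeries.coeff_mul_order_add_order, HahnSeries.leadingCoeff_eq,
      HahnSeries.leadingCoeff_eq]
  have hx' : x.coeff x.order ≠ 0 := by rw [← HahnSeries.leadingCoeff_eq]; exact HahnSeries.leadingCoeff_ne_zero.mpr hx
  have hy' : y.coeff y.order ≠ 0 := by rw [← HahnSeries.leadingCoeff_eq]; exact HahnSeries.leadingCoeff_ne_zero.mpr hy
  unfold vv
  rw [hc, HahnSeries.order_mul hx' hy', ho]

lemma zero_mem_Oring : (0 : F2 Fq) ∈ Oring Fq := Or.inl rfl

lemma one_mem_Oring : (1 : F2 Fq) ∈ Oring Fq := by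
  right
  rw [vv_one]
  exact Or.inr ⟨rfl, le_refl 0⟩

lemma div_mem_Oring (x y : F2 Fq) (h : vle Fq y x) : x / y ∈ Oring Fq := by
  obtain ⟨hy, hca⟩ := h
  rcases eq_or_ne x 0 with hx | hx
  · left
    rw [hx]
    exact zero_div y
  rcases hca with h0 | hle
  · exact absurd h0 hx
  have hq : x / y ≠ 0 := div_ne_zero (G₀ := F2 Fq) hx hy
  have hqy : x / y * y = x := div_mul_cancel₀ (G₀ := F2 Fq) x hy
  have hm := vv_mul Fq (x / y) y hq hy
  rw [hqy] at hm
  right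
  rcases h1 : vv Fq (x / y) with ⟨q1, q2⟩
  rcases h2 : vv Fq y with ⟨w1, w2⟩
  rw [h1, h2] at hm
  rw [hm, h2] at hle
  unfold lexle at hle ⊢
  simp only at hle ⊢
  omega

lemma div_mem_t1Oring (x y : F2 Fq) (h : vlt Fq y x) :
    ∃ z ∈ Oring Fq, x / y = t1 Fq * z := by
  obtain ⟨hy, hca⟩ := h
  rcases eq_or_ne x 0 with hx | hx
  · refine ⟨0, zero_mem_Oring Fq, ?_⟩
    rw [hx]
    exact (zero_div y).trans (mul_zero (t1 Fq)).symm
  rcases hca with h0 | hlt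
  · exact absurd h0 hx
  have ht1 := t1_ne Fq
  have hq : x / y ≠ 0 := div_ne_zero (G₀ := F2 Fq) hx hy
  have hz : x / y / t1 Fq ≠ 0 := div_ne_zero (G₀ := F2 Fq) hq ht1
  have heq : x / y = t1 Fq * (x / y / t1 Fq) :=
    ((div_mul_cancel₀ (G₀ := F2 Fq) (x / y) ht1).symm).trans
      (mul_comm (G := F2 Fq) _ _)
  refine ⟨x / y / t1 Fq, ?_, heq⟩
  have hm1 : vv Fq (x / y) =
      ((vv Fq (t1 Fq)).1 + (vv Fq (x / y / t1 Fq)).1,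
       (vv Fq (t1 Fq)).2 + (vv Fq (x / y / t1 Fq)).2) := by
    rw [← vv_mul Fq (t1 Fq) _ ht1 hz, ← heq]
  have hqy : x / y * y = x := div_mul_cancel₀ (G₀ := F2 Fq) x hy
  have hm2 := vv_mul Fq (x / y) y hq hy
  rw [hqy] at hm2
  right
  rcases h1 : vv Fq (x / y / t1 Fq) with ⟨z1, z2⟩
  rcases h2 : vv Fq y with ⟨w1, w2⟩
  rw [h1, vv_t1] at hm1
  rw [h2, hm1] at hm2
  rw [hm2, h2] at hlt
  unfold lexlt at hlt
  unfold lexle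
  simp only at hlt ⊢
  omega

lemma mul_t1_mem_Oring (z : F2 Fq) (hz : z ∈ Oring Fq) : t1 Fq * z ∈ Oring Fq := by
  rcases eq_or_ne z 0 with h0 | h0
  · left
    rw [h0]
    exact mul_zero (t1 Fq)
  rcases hz with h0' | hz
  · exact absurd h0' h0
  right
  have hm := vv_mul Fq (t1 Fq) z (t1_ne Fq) h0
  rw [hm, vv_t1]
  rcases h1 : vv Fq z with ⟨z1, z2⟩
  rw [h1] at hz
  unfold lexle at hz ⊢
  simp only at hz ⊢
  omega

/-- Lemma 1.2(4): if `v(d) ≤ v(b)` and `v(d) < v(c)`, then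
`(a b; c d) ∈ I·diag(d⁻¹, d)·I`. -/
theorem case_diag_d (Fq : Type) [Field Fq] [Fintype Fq] (a b c d : F2 Fq)
    (hx : (!![a, b; c, d] : Matrix (Fin 2) (Fin 2) (F2 Fq)).det = 1)
    (hdb : vle Fq d b) (hdc : vlt Fq d c) :
    (!![a, b; c, d] : Matrix (Fin 2) (Fin 2) (F2 Fq)) ∈
      doubleCoset Fq !![d⁻¹, 0; 0, d] := by
  have hd : d ≠ 0 := hdb.1
  have hdet : a * d - b * c = 1 := by rw [Matrix.det_fin_two_of] at hx; exact hx
  have hdd : d * d⁻¹ = 1 := mul_inv_cancel₀ (G₀ := F2 Fq) hd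
  obtain ⟨z, hzO, hzeq⟩ := div_mem_t1Oring Fq c d hdc
  have hcdO : c / d ∈ Oring Fq := hzeq ▸ mul_t1_mem_Oring Fq z hzO
  have hbdO : b / d ∈ Oring Fq := div_mem_Oring Fq b d hdb
  refine ⟨!![1, b / d; 0, 1], ?_, !![1, 0; c / d, 1], ?_, ?_⟩
  · refine ⟨by rw [Matrix.det_fin_two_of]; ring, ?_, 0, zero_mem_Oring Fq,
      (mul_zero (t1 Fq)).symm⟩
    intro i j
    fin_cases i <;> fin_cases j <;> simp <;>
      first
        | exact one_mem_Oring Fq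
        | exact hbdO
        | exact zero_mem_Oring Fq
  · refine ⟨by rw [Matrix.det_fin_two_of]; ring, ?_, z, hzO, hzeq⟩
    intro i j
    fin_cases i <;> fin_cases j <;> simp <;>
      first
        | exact one_mem_Oring Fq
        | exact hcdO
        | exact zero_mem_Oring Fq
  · refine Matrix.ext fun i j => ?_
    fin_cases i <;> fin_cases j <;>
      simp only [Matrix.mul_fin_two, Matrix.cons_val', Matrix.cons_val_zero,
        Matrix.cons_val_one, Matrix.head_cons, Matrix.empty_val', Fin.mk_zero,
        Fin.mk_one, Fin.isValue, Matrix.cons_val_fin_one, Matrix.head_fin_const,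
        Matrix.of_apply]
    · linear_combination d⁻¹ * hdet + (-a - b * c * d⁻¹) * hdd
    · linear_combination -b * hdd
    · linear_combination -c * hdd
    · ring
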